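/- arXiv:2210.12606 — 2 statements merged into one kernel-verified Lean document; each statement's English description precedes it below -/
import Mathlib

section
/- For any real-valued random variable X with finite variance, max(0, E[X]) ≤ E[max(0, X)] ≤ max(0, E[X]) + (1/2)·√(Var(X)). -/
/-!
The lower bound is Jensen's inequality for the convex function `max 0`. For the upper bound,
subadditivity of `max 0` gives `max 0 X ≤ max 0 E[X] + max 0 (X - E[X])`. A centred variable
has its positive and negative parts of equal mean, so `E[max 0 (X - E[X])] = E|X - E[X]| / 2`,
and `E|X - E[X]| ≤ √Var(X)` because the variance of `|X - E[X]|` is nonnegative.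
-/

open MeasureTheory ProbabilityTheory

section

variable {Ω : Type*} [MeasurableSpace Ω] {μ : Measure Ω} {X : Ω → ℝ}

lemma max_zero_add_le (a b : ℝ) : max 0 (a + b) ≤ max 0 a + max 0 b :=
  max_le (by positivity) (add_le_add (le_max_right _ _) (le_max_right _ _))

lemma MeasureTheory.Integrable.max_zero (hX : Integrable X μ) :
    Integrable (fun ω ↦ max 0 (X ω)) μ := by
  simpa only [max_comm] using hX.pos_part

lemma max_zero_integral_le_integral_max_zero (hX : Integrable X μ) :
    max 0 (∫ ω, X ω ∂μ) ≤ ∫ ω, max 0 (X ω) ∂μ :=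
  max_le (integral_nonneg fun _ ↦ le_max_left _ _)
    (integral_mono hX hX.max_zero fun _ ↦ le_max_right _ _)

lemma integral_max_zero_of_integral_eq_zero (hX : Integrable X μ) (h : ∫ ω, X ω ∂μ = 0) :
    ∫ ω, max 0 (X ω) ∂μ = (∫ ω, |X ω| ∂μ) / 2 := by
  simp only [integral_abs_eq_two_mul_integral_posPart_sub_integral hX, h, posPart_def,
    max_comm (0 : ℝ)]
  ring

lemma sq_integral_abs_le_integral_sq [IsProbabilityMeasure μ] (hX : MemLp X 2 μ) :
    (∫ ω, |X ω| ∂μ) ^ 2 ≤ ∫ ω, X ω ^ 2 ∂μ := by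
  have := variance_eq_sub hX.abs
  simp only [Pi.pow_apply, Pi.abs_apply, sq_abs] at this
  linarith [variance_nonneg |X| μ]

lemma integral_abs_sub_integral_le_sqrt_variance [IsProbabilityMeasure μ] (hX : MemLp X 2 μ) :
    ∫ ω, |X ω - ∫ ω', X ω' ∂μ| ∂μ ≤ √(variance X μ) := by
  rw [variance_eq_integral hX.aemeasurable]
  exact Real.le_sqrt_of_sq_le (sq_integral_abs_le_integral_sq (hX.sub (memLp_const _)))

lemma integral_max_zero_le_max_zero_integral_add_half_integral_abs_sub [IsProbabilityMeasure μ]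
    (hX : Integrable X μ) :
    ∫ ω, max 0 (X ω) ∂μ ≤
      max 0 (∫ ω, X ω ∂μ) + (∫ ω, |X ω - ∫ ω', X ω' ∂μ| ∂μ) / 2 := by
  set m := ∫ ω, X ω ∂μ
  have hY : Integrable (fun ω ↦ X ω - m) μ := hX.sub (integrable_const m)
  have hY_mean : ∫ ω, (X ω - m) ∂μ = 0 := by
    simp [integral_sub hX (integrable_const m), m]
  calc ∫ ω, max 0 (X ω) ∂μ ≤ ∫ ω, (max 0 m + max 0 (X ω - m)) ∂μ :=
        integral_mono hX.max_zero ((integrable_const _).add hY.max_zero) fun ω ↦ by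
          simpa using max_zero_add_le m (X ω - m)
    _ = max 0 m + (∫ ω, |X ω - m| ∂μ) / 2 := by
        rw [integral_add (integrable_const _) hY.max_zero, integral_const,
          integral_max_zero_of_integral_eq_zero hY hY_mean]
        simp

end

/-- for a random variable `X` with finite variance,
`max 0 (E[X]) ≤ E[max 0 X] ≤ max 0 (E[X]) + (1/2)√(Var X)`. -/
theorem positive_part_expectation_bounds {Ω : Type*} [MeasurableSpace Ω]
    (μ : Measure Ω) [IsProbabilityMeasure μ] (X : Ω → ℝ) (hX : MemLp X 2 μ) :
    max 0 (∫ ω, X ω ∂μ) ≤ (∫ ω, max 0 (X ω) ∂μ) ∧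
    (∫ ω, max 0 (X ω) ∂μ) ≤ max 0 (∫ ω, X ω ∂μ) + (1 / 2) * Real.sqrt (variance X μ) := by
  have hXi : Integrable X μ := hX.integrable one_le_two
  refine ⟨max_zero_integral_le_integral_max_zero hXi, ?_⟩
  linarith [integral_max_zero_le_max_zero_integral_add_half_integral_abs_sub hXi,
    integral_abs_sub_integral_le_sqrt_variance hX]
end

section
/- Suppose features x₁,…,x_d are conditionally independent given the label y ∈ {-1,1}, and feature i satisfies E[xᵢ | y=-1] ≤ 0 ≤ E[xᵢ | y=1]. Then any minimizer w* of the regularized soft-SVM objective satisfies wᵢ* ≥ 0. Symmetrically, if E[xᵢ | y=1] ≤ 0 ≤ E[xᵢ | y=-1], then wᵢ* ≤ 0. -/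
open MeasureTheory Finset
open scoped ENNReal

/-- The joint distribution of `(x,y)` on `ℝ^d × {-1,1}`: with probability `q` the label is `1`
and the features are drawn from the product measure `Measure.pi ηp` (features conditionally
independent given the label), with probability `1-q` the label is `-1` and the features are
drawn from `Measure.pi ηn`. -/
noncomputable def jointMeasure {d : ℕ} (ηp ηn : Fin d → Measure ℝ) (q : ℝ≥0∞) :
    Measure ((Fin d → ℝ) × ℝ) :=
  q • (Measure.pi ηp).map (fun x => (x, (1 : ℝ))) +
    (1 - q) • (Measure.pi ηn).map (fun x => (x, (-1 : ℝ)))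

/-- The regularized soft-SVM objective. -/
noncomputable def svmLoss {d : ℕ} (μ : Measure ((Fin d → ℝ) × ℝ)) (lam : ℝ)
    (w : Fin d → ℝ) : ℝ :=
  (∫ p, max 0 (1 - p.2 * ∑ i, w i * p.1 i) ∂μ) + lam / 2 * ∑ i, (w i) ^ 2

/-!
Let `w'` be `w*` with its `i`-th coordinate set to `0`. For each label `y`, write the margin as
`1 - y⟪w, x⟫ = U + Z` with `U = 1 - y⟪w', x⟫` and `Z = -y wᵢ xᵢ`; under the product measure `U` and
`Z` are independent. Convexity of the hinge at `U` gives `max 0 (U + Z) ≥ max 0 U + 1[U > 0] Z`,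
and by independence `E[1[U > 0] Z] = P(U > 0) E[Z]`, which is `≥ 0` under the sign hypotheses on
`E[xᵢ | y]`. So `w'` has no larger hinge loss than `w*`, and a strictly smaller regularizer
unless `wᵢ* = 0`; minimality of `w*` forces `wᵢ*` to have the claimed sign.
-/

open ProbabilityTheory

theorem max_zero_add_ite_mul_le (u t : ℝ) :
    max 0 u + (if 0 < u then 1 else 0) * t ≤ max 0 (u + t) := by
  split_ifs with hu
  · rw [max_eq_right hu.le, one_mul]
    exact le_max_right _ _
  · rw [max_eq_left (not_lt.mp hu), zero_mul, add_zero]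
    exact le_max_left _ _

theorem integral_max_zero_le_integral_max_zero_add {Ω : Type*} [MeasurableSpace Ω]
    {μ : Measure Ω} {U Z : Ω → ℝ} (hUZ : U ⟂ᵢ[μ] Z) (hU : Integrable U μ) (hZ : Integrable Z μ)
    (hZ_nonneg : 0 ≤ ∫ ω, Z ω ∂μ) :
    ∫ ω, max 0 (U ω) ∂μ ≤ ∫ ω, max 0 (U ω + Z ω) ∂μ := by
  set s : ℝ → ℝ := fun u => if 0 < u then 1 else 0
  have hs : Measurable s := Measurable.ite measurableSet_Ioi measurable_const measurable_const
  have hsU : Integrable (fun ω => s (U ω) * Z ω) μ := by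
    refine hZ.bdd_mul (c := 1) (hs.comp_aemeasurable hU.aemeasurable).aestronglyMeasurable
      (.of_forall fun ω => ?_)
    by_cases h : 0 < U ω <;> simp [s, h]
  have hmean : ∫ ω, s (U ω) * Z ω ∂μ = (∫ ω, s (U ω) ∂μ) * ∫ ω, Z ω ∂μ :=
    hUZ.integral_fun_comp_mul_comp (g := id) hU.aemeasurable hZ.aemeasurable
      hs.aestronglyMeasurable aestronglyMeasurable_id
  have hs_nonneg : 0 ≤ ∫ ω, s (U ω) ∂μ :=
    integral_nonneg fun ω => by by_cases h : 0 < U ω <;> simp [s, h]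
  have hpos : Integrable (fun ω => max 0 (U ω)) μ := (integrable_zero _ _ _).sup hU
  calc ∫ ω, max 0 (U ω) ∂μ
      ≤ ∫ ω, max 0 (U ω) ∂μ + ∫ ω, s (U ω) * Z ω ∂μ := by
        rw [hmean]
        exact le_add_of_nonneg_right (mul_nonneg hs_nonneg hZ_nonneg)
    _ = ∫ ω, (max 0 (U ω) + s (U ω) * Z ω) ∂μ := (integral_add hpos hsU).symm
    _ ≤ ∫ ω, max 0 (U ω + Z ω) ∂μ :=
        integral_mono (hpos.add hsU) ((integrable_zero _ _ _).sup (hU.add hZ))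
          fun ω => max_zero_add_ite_mul_le (U ω) (Z ω)

theorem sum_update_zero_eq_sum_erase {ι M N : Type*} [Fintype ι] [DecidableEq ι] [Zero M]
    [AddCommMonoid N] (f : ι → M → N) (hf : ∀ j, f j 0 = 0) (w : ι → M) (i : ι) :
    ∑ j, f j (Function.update w i 0 j) = ∑ j ∈ univ.erase i, f j (w j) := by
  rw [← add_sum_erase _ _ (mem_univ i), Function.update_self, hf, zero_add]
  exact sum_congr rfl fun j hj => by rw [Function.update_of_ne (ne_of_mem_erase hj)]

def hingeLoss {ι : Type*} [Fintype ι] (w : ι → ℝ) (x : ι → ℝ) (y : ℝ) : ℝ :=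
  max 0 (1 - y * ∑ j, w j * x j)

section ProductMeasure

variable {ι : Type*} [Fintype ι] {η : ι → Measure ℝ}

theorem integrable_sum_mul_pi [∀ j, IsFiniteMeasure (η j)]
    (hη : ∀ j, Integrable (fun t : ℝ => t) (η j)) (w : ι → ℝ) (s : Finset ι) :
    Integrable (fun x : ι → ℝ => ∑ j ∈ s, w j * x j) (Measure.pi η) :=
  integrable_finsetSum _ fun j _ => (integrable_eval (i := j) (hη j)).const_mul (w j)

theorem integrable_hingeLoss_pi [∀ j, IsFiniteMeasure (η j)]
    (hη : ∀ j, Integrable (fun t : ℝ => t) (η j)) (w : ι → ℝ) (y : ℝ) :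
    Integrable (fun x => hingeLoss w x y) (Measure.pi η) :=
  (integrable_zero _ _ _).sup
    ((integrable_const 1).sub ((integrable_sum_mul_pi hη w univ).const_mul y))

theorem integral_hingeLoss_update_zero_le [DecidableEq ι] [∀ j, IsProbabilityMeasure (η j)]
    (hη : ∀ j, Integrable (fun t : ℝ => t) (η j)) (w : ι → ℝ) (i : ι) (y : ℝ)
    (hsign : y * w i * ∫ t, t ∂η i ≤ 0) :
    ∫ x, hingeLoss (Function.update w i 0) x y ∂Measure.pi η
      ≤ ∫ x, hingeLoss w x y ∂Measure.pi η := by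
  set f : ι → (ι → ℝ) → ℝ := fun j x => w j * x j
  have hf : ∀ j, Measurable (f j) := fun j => by fun_prop
  have hind : (∑ j ∈ univ.erase i, f j) ⟂ᵢ[Measure.pi η] f i :=
    (iIndepFun_pi (X := fun j t => w j * t) fun j => by fun_prop).indepFun_finsetSum_of_notMem
      hf (notMem_erase i univ)
  have hUZ : (fun x => 1 - y * ∑ j ∈ univ.erase i, f j x) ⟂ᵢ[Measure.pi η]
      (fun x => -y * f i x) := by
    simpa [Function.comp_def, Finset.sum_apply] using
      hind.comp (φ := fun s => 1 - y * s) (ψ := fun t => -y * t) (by fun_prop) (by fun_prop)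
  have hZ_mean : ∫ x, -y * f i x ∂Measure.pi η = -(y * w i * ∫ t, t ∂η i) := by
    simp only [f, ← mul_assoc, integral_const_mul, integral_eval]
    ring
  have hsplit : ∀ x, ∑ j, w j * x j = ∑ j ∈ univ.erase i, f j x + f i x := fun x =>
    (sum_erase_add _ _ (mem_univ i)).symm
  convert integral_max_zero_le_integral_max_zero_add hUZ
    ((integrable_const 1).sub ((integrable_sum_mul_pi hη w _).const_mul y))
    (((integrable_eval (i := i) (hη i)).const_mul (w i)).const_mul (-y))
    (by rw [hZ_mean]; linarith) using 3 with x x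
  · rw [hingeLoss, sum_update_zero_eq_sum_erase (fun j t => t * x j) (fun j => zero_mul _)]
  · rw [hingeLoss, hsplit]
    congr 1
    ring

end ProductMeasure

theorem integral_jointMeasure {d : ℕ} {ηp ηn : Fin d → Measure ℝ} {q : ℝ≥0∞} (hq : q ≠ ∞)
    {f : (Fin d → ℝ) × ℝ → ℝ} (hf : Measurable f)
    (hfp : Integrable (fun x => f (x, 1)) (Measure.pi ηp))
    (hfn : Integrable (fun x => f (x, -1)) (Measure.pi ηn)) :
    ∫ p, f p ∂jointMeasure ηp ηn q
      = q.toReal * ∫ x, f (x, 1) ∂Measure.pi ηp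
        + (1 - q).toReal * ∫ x, f (x, -1) ∂Measure.pi ηn := by
  have hmp : Measurable fun x : Fin d → ℝ => (x, (1 : ℝ)) := by fun_prop
  have hmn : Measurable fun x : Fin d → ℝ => (x, (-1 : ℝ)) := by fun_prop
  have hip : Integrable f ((Measure.pi ηp).map fun x => (x, (1 : ℝ))) :=
    (integrable_map_measure hf.aestronglyMeasurable hmp.aemeasurable).mpr hfp
  have hin : Integrable f ((Measure.pi ηn).map fun x => (x, (-1 : ℝ))) :=
    (integrable_map_measure hf.aestronglyMeasurable hmn.aemeasurable).mpr hfn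
  rw [jointMeasure, integral_add_measure (hip.smul_measure hq)
      (hin.smul_measure (ne_top_of_le_ne_top ENNReal.one_ne_top tsub_le_self)),
    integral_smul_measure, integral_smul_measure,
    integral_map hmp.aemeasurable hf.aestronglyMeasurable,
    integral_map hmn.aemeasurable hf.aestronglyMeasurable, smul_eq_mul, smul_eq_mul]

section SVM

variable {d : ℕ} {ηp ηn : Fin d → Measure ℝ} [∀ j, IsProbabilityMeasure (ηp j)]
  [∀ j, IsProbabilityMeasure (ηn j)] {q : ℝ≥0∞}

theorem svmLoss_jointMeasure (hq : q ≠ ∞) (hip : ∀ j, Integrable (fun t : ℝ => t) (ηp j))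
    (hin : ∀ j, Integrable (fun t : ℝ => t) (ηn j)) (lam : ℝ) (w : Fin d → ℝ) :
    svmLoss (jointMeasure ηp ηn q) lam w
      = q.toReal * ∫ x, hingeLoss w x 1 ∂Measure.pi ηp
        + (1 - q).toReal * ∫ x, hingeLoss w x (-1) ∂Measure.pi ηn
        + lam / 2 * ∑ j, w j ^ 2 := by
  rw [svmLoss]
  congr 1
  exact integral_jointMeasure hq (f := fun p => hingeLoss w p.1 p.2)
    (by unfold hingeLoss; fun_prop) (integrable_hingeLoss_pi hip w 1)
    (integrable_hingeLoss_pi hin w (-1))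

theorem svmLoss_update_zero_lt (hq : q ≠ ∞) (hip : ∀ j, Integrable (fun t : ℝ => t) (ηp j))
    (hin : ∀ j, Integrable (fun t : ℝ => t) (ηn j)) {lam : ℝ} (hlam : 0 < lam)
    {w : Fin d → ℝ} {i : Fin d} (hwi : w i ≠ 0) (hp : w i * ∫ t, t ∂ηp i ≤ 0)
    (hn : 0 ≤ w i * ∫ t, t ∂ηn i) :
    svmLoss (jointMeasure ηp ηn q) lam (Function.update w i 0)
      < svmLoss (jointMeasure ηp ηn q) lam w := by
  have hpos := integral_hingeLoss_update_zero_le hip w i 1 (by linarith)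
  have hneg := integral_hingeLoss_update_zero_le hin w i (-1) (by linarith)
  have hreg : ∑ j, Function.update w i 0 j ^ 2 + w i ^ 2 = ∑ j, w j ^ 2 := by
    rw [sum_update_zero_eq_sum_erase (fun _ t => t ^ 2) (fun _ => zero_pow two_ne_zero),
      sum_erase_add _ _ (mem_univ i)]
  rw [svmLoss_jointMeasure hq hip hin, svmLoss_jointMeasure hq hip hin, ← hreg]
  have := mul_le_mul_of_nonneg_left hpos (ENNReal.toReal_nonneg (a := q))
  have := mul_le_mul_of_nonneg_left hneg (ENNReal.toReal_nonneg (a := 1 - q))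
  have : 0 < lam / 2 * w i ^ 2 := by positivity
  linarith

end SVM

/-- with features conditionally independent given the label, if feature `i`
satisfies `E[xᵢ|y=-1] ≤ 0 ≤ E[xᵢ|y=1]` then any minimizer `w*` of the regularized soft-SVM
objective has `wᵢ* ≥ 0`; symmetrically, if `E[xᵢ|y=1] ≤ 0 ≤ E[xᵢ|y=-1]` then `wᵢ* ≤ 0`. -/
theorem svm_minimizer_sign {d : ℕ} (ηp ηn : Fin d → Measure ℝ)
    [∀ i, IsProbabilityMeasure (ηp i)] [∀ i, IsProbabilityMeasure (ηn i)]
    (q : ℝ≥0∞) (hq : q ≤ 1) (lam : ℝ) (hlam : 0 < lam)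
    (hip : ∀ j, Integrable (fun t : ℝ => t) (ηp j))
    (hin : ∀ j, Integrable (fun t : ℝ => t) (ηn j))
    (wstar : Fin d → ℝ)
    (hmin : ∀ w, svmLoss (jointMeasure ηp ηn q) lam wstar ≤
      svmLoss (jointMeasure ηp ηn q) lam w)
    (i : Fin d) :
    ((∫ t, t ∂(ηn i)) ≤ 0 ∧ 0 ≤ (∫ t, t ∂(ηp i)) → 0 ≤ wstar i) ∧
    ((∫ t, t ∂(ηp i)) ≤ 0 ∧ 0 ≤ (∫ t, t ∂(ηn i)) → wstar i ≤ 0) := by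
  have hq' : q ≠ ∞ := ne_top_of_le_ne_top ENNReal.one_ne_top hq
  have hzero (hp : wstar i * ∫ t, t ∂ηp i ≤ 0) (hn : 0 ≤ wstar i * ∫ t, t ∂ηn i) :
      wstar i = 0 := by
    by_contra hwi
    exact (svmLoss_update_zero_lt hq' hip hin hlam hwi hp hn).not_ge (hmin _)
  refine ⟨fun ⟨hn, hp⟩ => ?_, fun ⟨hp, hn⟩ => ?_⟩
  · by_contra! hwi
    exact hwi.ne (hzero (mul_nonpos_of_nonpos_of_nonneg hwi.le hp)
      (mul_nonneg_of_nonpos_of_nonpos hwi.le hn))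
  · by_contra! hwi
    exact hwi.ne' (hzero (mul_nonpos_of_nonneg_of_nonpos hwi.le hp) (mul_nonneg hwi.le hn))
end
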